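/- Fix n, t, s, q ∈ ℕ with n ≥ 1 and set N = n + t. Let 𝒢 be a finite gate set: a finite family of gates, each gate g consisting of an arity a(g) ≤ q and a unitary U_g on EuclideanSpace ℂ (Fin a(g) → Fin 2). For an injective map ι : Fin a(g) → Fin N, the application Apply(g, ι) is the linear map on EuclideanSpace ℂ (Fin N → Fin 2) given by (Apply(g, ι) v)(σ) = Σ_{c : Fin a(g) → Fin 2} U_g(σ∘ι, c) · v(σ[ι := c]), where σ[ι := c] agrees with σ off the range of ι and equals c(k) at ι(k). A circuit of size k over 𝒢 on N qubits is a list of k pairs (gate, injective wire assignment), and its operator C is the composition of the corresponding applications in order. Say such a circuit computes f : (Fin n → Fin 2) → Fin 2 if ‖Π_{f(x)}(C e_{pad(x)})‖² > 1/2 for every x. Then the number of functions f : (Fin n → Fin 2) → Fin 2 that are computed by some circuit over 𝒢 of size at most s on N qubits is at most (card(𝒢) · N^q + 1)^s. -/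

import Mathlib

/-!
For each fixed setting of the bits off its wires, a gate application acts as the unitary `U_g`
on the bits on its wires; hence gate applications, and so circuits, preserve the norm. For a
unit vector the two first-bit projections cannot both carry weight `> 1/2`, so a circuit
computes at most one function. The computed functions are therefore at most as many as the
circuits, i.e. lists of length `≤ s` over at most `card 𝒢 · N^q` steps, and such lists embed
into `Fin s → Option step` via `l ↦ (l[i]?)ᵢ`.
-/

/-- `pad n t x` is the length-`(n+t)` bitstring equal to `x` on the first `n`
coordinates and `0` on the remaining `t`. -/
def pad (n t : ℕ) (x : Fin n → Fin 2) : Fin (n + t) → Fin 2 :=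
  fun j => if h : (j : ℕ) < n then x ⟨j, h⟩ else 0

/-- Orthogonal projection onto bitstrings whose first bit equals `b`. -/
def firstBitProj {N : ℕ} (hN : 0 < N) (b : Fin 2)
    (v : EuclideanSpace ℂ (Fin N → Fin 2)) : EuclideanSpace ℂ (Fin N → Fin 2) :=
  WithLp.toLp 2 (fun s => if s ⟨0, hN⟩ = b then v s else 0)

/-- A quantum gate: an arity (at most `q`) together with a unitary on the
corresponding space. -/
structure Gate (q : ℕ) where
  arity : ℕ
  arity_le : arity ≤ q
  U : EuclideanSpace ℂ (Fin arity → Fin 2) ≃ₗᵢ[ℂ] EuclideanSpace ℂ (Fin arity → Fin 2)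

/-- `updAt emb σ c` agrees with `σ` off the range of `emb` and equals `c k` at
`emb k`. -/
noncomputable def updAt {a N : ℕ} (emb : Fin a → Fin N) (σ : Fin N → Fin 2)
    (c : Fin a → Fin 2) : Fin N → Fin 2 :=
  fun j => if h : ∃ k, emb k = j then c h.choose else σ j

/-- Application of a gate `g` along an (injective) wire assignment
`emb : Fin g.arity → Fin N`. -/
noncomputable def applyGate {q N : ℕ} (g : Gate q) (emb : Fin g.arity → Fin N)
    (v : EuclideanSpace ℂ (Fin N → Fin 2)) : EuclideanSpace ℂ (Fin N → Fin 2) :=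
  WithLp.toLp 2 (fun σ => ∑ c : Fin g.arity → Fin 2,
    (g.U (EuclideanSpace.single c 1)) (σ ∘ emb) * v (updAt emb σ c))

/-- One step of a circuit over the gate set `G`: a gate together with an
injective wire assignment. -/
structure CircuitStep (q N : ℕ) {ι : Type*} (G : ι → Gate q) where
  gate : ι
  wires : Fin (G gate).arity → Fin N
  inj : Function.Injective wires

/-- The operator of a circuit: the composition of the gate applications in
order. -/
noncomputable def circuitOp {q N : ℕ} {ι : Type*} (G : ι → Gate q) :
    List (CircuitStep q N G) →
      EuclideanSpace ℂ (Fin N → Fin 2) → EuclideanSpace ℂ (Fin N → Fin 2)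
  | [] => id
  | step :: rest => fun v => circuitOp G rest (applyGate (G step.gate) step.wires v)

noncomputable def wireSplit {a N : ℕ} (emb : Fin a → Fin N) (hemb : Function.Injective emb) :
    (Fin N → Fin 2) ≃ (Fin a → Fin 2) × ({j : Fin N // ¬ ∃ k, emb k = j} → Fin 2) where
  toFun σ := (σ ∘ emb, fun j => σ j.1)
  invFun p := fun j => if h : ∃ k, emb k = j then p.1 h.choose else p.2 ⟨j, h⟩
  left_inv σ := by
    funext j
    by_cases h : ∃ k, emb k = j
    · simp only [dif_pos h]
      exact congrArg σ h.choose_spec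
    · simp only [dif_neg h]
  right_inv p := by
    refine Prod.ext (funext fun j => ?_) (funext fun j => ?_)
    · have h : ∃ k, emb k = emb j := ⟨j, rfl⟩
      simp only [Function.comp_apply, dif_pos h]
      exact congrArg p.1 (hemb h.choose_spec)
    · simp only [dif_neg j.2]

noncomputable def wireSlice {a N : ℕ} (emb : Fin a → Fin N) (hemb : Function.Injective emb)
    (v : EuclideanSpace ℂ (Fin N → Fin 2)) (ρ : {j : Fin N // ¬ ∃ k, emb k = j} → Fin 2) :
    EuclideanSpace ℂ (Fin a → Fin 2) :=
  WithLp.toLp 2 fun c => v ((wireSplit emb hemb).symm (c, ρ))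

lemma applyGate_wireSplit_symm {q N : ℕ} (g : Gate q) (emb : Fin g.arity → Fin N)
    (hemb : Function.Injective emb) (v : EuclideanSpace ℂ (Fin N → Fin 2))
    (b : Fin g.arity → Fin 2) (ρ : {j : Fin N // ¬ ∃ k, emb k = j} → Fin 2) :
    applyGate g emb v ((wireSplit emb hemb).symm (b, ρ)) = g.U (wireSlice emb hemb v ρ) b := by
  have hsplit := (wireSplit emb hemb).apply_symm_apply (b, ρ)
  have hwires : (wireSplit emb hemb).symm (b, ρ) ∘ emb = b := congrArg Prod.fst hsplit
  -- `updAt` is by definition `(wireSplit emb hemb).symm (c, (wireSplit emb hemb σ).2)`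
  have hupd : ∀ c, updAt emb ((wireSplit emb hemb).symm (b, ρ)) c =
      (wireSplit emb hemb).symm (c, ρ) := fun c =>
    congrArg (fun ρ' => (wireSplit emb hemb).symm (c, ρ')) (congrArg Prod.snd hsplit)
  conv_rhs => rw [← (EuclideanSpace.basisFun _ ℂ).sum_repr (wireSlice emb hemb v ρ)]
  simp only [applyGate, PiLp.toLp_apply, hwires, hupd, map_sum, map_smul,
    EuclideanSpace.basisFun_repr, EuclideanSpace.basisFun_apply, WithLp.ofLp_sum,
    WithLp.ofLp_smul, Finset.sum_apply, Pi.smul_apply, smul_eq_mul, wireSlice]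
  exact Finset.sum_congr rfl fun c _ => mul_comm _ _

lemma norm_applyGate {q N : ℕ} (g : Gate q) (emb : Fin g.arity → Fin N)
    (hemb : Function.Injective emb) (v : EuclideanSpace ℂ (Fin N → Fin 2)) :
    ‖applyGate g emb v‖ = ‖v‖ := by
  suffices ‖applyGate g emb v‖ ^ 2 = ‖v‖ ^ 2 by
    simpa using congrArg Real.sqrt this
  simp only [EuclideanSpace.norm_sq_eq]
  rw [← (wireSplit emb hemb).symm.sum_comp, ← (wireSplit emb hemb).symm.sum_comp,
    Fintype.sum_prod_type_right, Fintype.sum_prod_type_right]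
  refine Finset.sum_congr rfl fun ρ _ => ?_
  simp only [applyGate_wireSplit_symm]
  rw [← EuclideanSpace.norm_sq_eq, g.U.norm_map, EuclideanSpace.norm_sq_eq]
  rfl

lemma norm_circuitOp {q N : ℕ} {ι : Type*} (G : ι → Gate q)
    (C : List (CircuitStep q N G)) (v : EuclideanSpace ℂ (Fin N → Fin 2)) :
    ‖circuitOp G C v‖ = ‖v‖ := by
  induction C generalizing v with
  | nil => rfl
  | cons step rest ih => rw [circuitOp, ih, norm_applyGate _ _ step.inj]

lemma norm_sq_firstBitProj_add_le {N : ℕ} (hN : 0 < N) {b b' : Fin 2} (hbb' : b ≠ b')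
    (v : EuclideanSpace ℂ (Fin N → Fin 2)) :
    ‖firstBitProj hN b v‖ ^ 2 + ‖firstBitProj hN b' v‖ ^ 2 ≤ ‖v‖ ^ 2 := by
  simp only [EuclideanSpace.norm_sq_eq, ← Finset.sum_add_distrib]
  refine Finset.sum_le_sum fun s _ => ?_
  by_cases hs : s ⟨0, hN⟩ = b
  · simp [firstBitProj, hs, hbb']
  · simp only [firstBitProj, hs, if_false, PiLp.toLp_apply]
    split_ifs <;> simp

lemma eq_of_half_lt_norm_sq_firstBitProj {N : ℕ} (hN : 0 < N) {b b' : Fin 2}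
    {v : EuclideanSpace ℂ (Fin N → Fin 2)} (hv : ‖v‖ = 1)
    (hb : 1 / 2 < ‖firstBitProj hN b v‖ ^ 2) (hb' : 1 / 2 < ‖firstBitProj hN b' v‖ ^ 2) :
    b = b' := by
  by_contra hbb'
  have := norm_sq_firstBitProj_add_le hN hbb' v
  rw [hv] at this
  linarith

namespace CircuitStep

variable {q N : ℕ} {ι : Type*} (G : ι → Gate q)

def toSigma (st : CircuitStep q N G) : Σ i, (Fin (G i).arity → Fin N) := ⟨st.gate, st.wires⟩

lemma toSigma_injective : Function.Injective (toSigma (N := N) G) := by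
  rintro ⟨i, w, _⟩ ⟨i', w', _⟩ h
  obtain ⟨rfl, h⟩ := Sigma.mk.inj_iff.mp h
  cases eq_of_heq h
  rfl

instance [Finite ι] : Finite (CircuitStep q N G) :=
  Finite.of_injective _ (toSigma_injective G)

lemma natCard_le [Fintype ι] (hN : 0 < N) :
    Nat.card (CircuitStep q N G) ≤ Fintype.card ι * N ^ q :=
  calc Nat.card (CircuitStep q N G) ≤ Nat.card (Σ i, (Fin (G i).arity → Fin N)) :=
        Nat.card_le_card_of_injective _ (toSigma_injective G)
    _ = ∑ i, N ^ (G i).arity := by simp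
    _ ≤ ∑ _i : ι, N ^ q := Finset.sum_le_sum fun i _ => Nat.pow_le_pow_right hN (G i).arity_le
    _ = Fintype.card ι * N ^ q := by simp

end CircuitStep

lemma List.ncard_setOf_length_le (α : Type*) [Finite α] (s : ℕ) :
    {l : List α | l.length ≤ s}.ncard ≤ (Nat.card α + 1) ^ s := by
  have hinj : Set.InjOn (fun (l : List α) (i : Fin s) => l[(i : ℕ)]?) {l | l.length ≤ s} := by
    intro l hl l' hl' h
    refine List.ext_getElem? fun m => ?_
    by_cases hm : m < s
    · exact congrFun h ⟨m, hm⟩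
    · simp only [Set.mem_ofPred_eq] at hl hl'
      rw [List.getElem?_eq_none (by omega), List.getElem?_eq_none (by omega)]
  calc {l : List α | l.length ≤ s}.ncard ≤ (Set.univ : Set (Fin s → Option α)).ncard :=
        Set.ncard_le_ncard_of_injOn _ (fun _ _ => Set.mem_univ _) hinj
    _ = (Nat.card α + 1) ^ s := by simp [Set.ncard_univ, Nat.card_fun]

lemma ncard_setOf_exists_list_le {α β : Type*} [Finite α] (R : List α → β → Prop)
    (hR : ∀ l b b', R l b → R l b' → b = b') (s : ℕ) :
    {b | ∃ l : List α, l.length ≤ s ∧ R l b}.ncard ≤ (Nat.card α + 1) ^ s := by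
  let witness (b : β) : List α := Classical.epsilon fun l => l.length ≤ s ∧ R l b
  have hwitness : ∀ b ∈ {b | ∃ l : List α, l.length ≤ s ∧ R l b},
      (witness b).length ≤ s ∧ R (witness b) b := fun b hb => Classical.epsilon_spec hb
  refine le_trans (Set.ncard_le_ncard_of_injOn witness (fun b hb => (hwitness b hb).1) ?_ ?_)
    (List.ncard_setOf_length_le α s)
  · intro b hb b' hb' h
    exact hR _ _ _ (hwitness b hb).2 (h ▸ (hwitness b' hb').2)
  · exact List.finite_length_le α s

/-- The number of Boolean functions `f : {0,1}ⁿ → {0,1}` computed (with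
per-input success probability `> 1/2`) by some circuit of size at most `s`
over a finite gate set `G` of arity-`≤ q` gates on `N = n + t` qubits is at
most `(card 𝒢 · N^q + 1)^s`. -/
theorem count_computable_functions (n t s q : ℕ) (hn : 1 ≤ n)
    {ι : Type*} [Fintype ι] (G : ι → Gate q) :
    Set.ncard {f : (Fin n → Fin 2) → Fin 2 |
        ∃ C : List (CircuitStep q (n + t) G), C.length ≤ s ∧
          ∀ x, 1 / 2 < ‖firstBitProj (show 0 < n + t by omega) (f x)
            (circuitOp G C (EuclideanSpace.single (pad n t x) 1))‖ ^ 2} ≤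
      (Fintype.card ι * (n + t) ^ q + 1) ^ s := by
  have hN : 0 < n + t := by omega
  refine le_trans (ncard_setOf_exists_list_le _ (fun C f f' hf hf' => ?_) s)
    (Nat.pow_le_pow_left (Nat.add_le_add_right (CircuitStep.natCard_le G hN) 1) s)
  funext x
  refine eq_of_half_lt_norm_sq_firstBitProj hN ?_ (hf x) (hf' x)
  rw [norm_circuitOp, PiLp.norm_single, norm_one]
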